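/- For coprime positive integers s, t ≥ 2, every partition that is simultaneously s-core and t-core has all hook lengths at most st - s - t. -/

import Mathlib

/-- A partition represented as a weakly decreasing list of positive parts. -/
def IsPartitionList (l : List ℕ) : Prop :=
  l.Pairwise (· ≥ ·) ∧ ∀ p ∈ l, 0 < p

/-- Hook length of the cell in row `i`, column `j` (both 0-indexed). -/
def hookLen (l : List ℕ) (i j : ℕ) : ℕ :=
  (l.getD i 0 - j) + (l.drop (i + 1)).countP (fun a => decide (j < a))

/-- The hookset of a partition: the set of its hook lengths. -/
def hookset (l : List ℕ) : Set ℕ :=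
  {h | ∃ i j, i < l.length ∧ j < l.getD i 0 ∧ h = hookLen l i j}

/-- `l` is a `t`-core: no hook length of `l` is divisible by `t`. -/
def IsCore (l : List ℕ) (t : ℕ) : Prop := ∀ h ∈ hookset l, ¬ t ∣ h

/-- A numerical set: contains 0 and has finite complement in ℕ. -/
def NumericalSet (S : Set ℕ) : Prop := 0 ∈ S ∧ Sᶜ.Finite

/-- The atom monoid of a numerical set. -/
def atomMonoid (S : Set ℕ) : Set ℕ := {n | ∀ s ∈ S, n + s ∈ S}

/-- The set of positions of east steps of the profile of the partition `l`
(step `i` is north exactly when `i = l[a] + (length - 1 - a)` for some row `a`). -/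
def pathSet (l : List ℕ) : Set ℕ :=
  {i | ¬ ∃ a, a < l.length ∧ i = l.getD a 0 + (l.length - 1 - a)}

/-- The staircase partition `(k, k-1, ..., 2, 1)`. -/
def staircase (k : ℕ) : List ℕ := (List.range k).reverse.map (· + 1)

/-!
Label the profile of a partition by `0, 1, 2, …`, so that the north steps sit at the β-numbers
`β a = λ a + (n - 1 - a)`. The hooks of row `i` are exactly the differences `β i - m` with `m < β i`
an east step. If `a + b = β i - m` is a hook, then the step `β i - a` is either east, making `a` a
hook of row `i`, or north, equal to some `β i'`, making `b = β i' - m` a hook of row `i'`. Hence the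
non-hooks form an additive submonoid of `ℕ`; for an `s`- and `t`-core it contains `s` and `t`, so by
Sylvester's theorem it contains every integer above `s * t - s - t`.
-/

theorem Nat.exists_forall_lt_iff_lt_of_antitone {P : ℕ → Prop} (hP : Antitone P)
    (n : ℕ) : ∃ k ≤ n, ∀ a < n, P a ↔ a < k := by
  classical
  have hex : ∃ k, k = n ∨ ¬P k := ⟨n, Or.inl rfl⟩
  refine ⟨Nat.find hex, Nat.find_min' hex (Or.inl rfl), fun a ha => ⟨fun hPa => ?_, fun hak => ?_⟩⟩
  · by_contra hka
    rcases Nat.find_spec hex with hkn | hPk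
    · omega
    · exact hPk (hP (not_lt.mp hka) hPa)
  · exact not_not.mp fun hPa => Nat.find_min hex hak (Or.inr hPa)

theorem List.countP_drop_eq_sub {α : Type*} {l : List α} {p : α → Bool} {k d : ℕ}
    (hk : k ≤ l.length) (hp : ∀ a (ha : a < l.length), p l[a] ↔ a < k) (hd : d ≤ k) :
    (l.drop d).countP p = k - d := by
  have hprefix : ((l.drop d).take (k - d)).countP p = k - d := by
    rw [List.countP_eq_length.mpr, List.length_take, List.length_drop]
    · omega
    · intro x hx
      obtain ⟨i, hi, rfl⟩ := List.mem_take_iff_getElem.mp hx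
      simp only [List.getElem_drop, List.length_drop] at hi ⊢
      exact (hp _ _).mpr (by omega)
  have hsuffix : ((l.drop d).drop (k - d)).countP p = 0 := by
    rw [List.countP_eq_zero]
    intro x hx
    obtain ⟨i, hi, rfl⟩ := List.mem_drop_iff_getElem.mp hx
    simp only [List.getElem_drop, List.length_drop] at hi ⊢
    exact fun h => by have := (hp _ _).mp h; omega
  rw [← List.take_append_drop (k - d) (l.drop d), List.countP_append, hprefix, hsuffix, Nat.add_zero]

section Hooks

variable {l : List ℕ}

/-- The first-column hook length of row `a`; `pathSet l` is the complement of the set of these. -/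
def betaNumber (l : List ℕ) (a : ℕ) : ℕ := l.getD a 0 + (l.length - 1 - a)

theorem getD_antitone (hl : l.Pairwise (· ≥ ·)) : Antitone (l.getD · 0) := by
  intro a b hab
  rcases lt_or_ge b l.length with hb | hb
  · simp only [List.getD_eq_getElem _ _ hb, List.getD_eq_getElem _ _ (hab.trans_lt hb)]
    rcases hab.eq_or_lt with rfl | hlt
    · rfl
    · exact List.pairwise_iff_getElem.mp hl a b _ hb hlt
  · exact (List.getD_eq_default _ _ hb).trans_le (Nat.zero_le _)

theorem betaNumber_antitone (hl : l.Pairwise (· ≥ ·)) : Antitone (betaNumber l) := by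
  intro a b hab
  have := getD_antitone hl hab
  simp only [betaNumber] at this ⊢
  omega

theorem betaNumber_add_sub_le (hl : l.Pairwise (· ≥ ·)) {a b : ℕ} (hab : a ≤ b)
    (hb : b < l.length) : betaNumber l b + (b - a) ≤ betaNumber l a := by
  have := getD_antitone hl hab
  simp only [betaNumber] at this ⊢
  omega

theorem hookLen_eq_of_forall_lt_iff {i j k : ℕ} (hk : k ≤ l.length) (hik : i < k)
    (hrows : ∀ a < l.length, j < l.getD a 0 ↔ a < k) :
    hookLen l i j = l.getD i 0 - j + (k - (i + 1)) := by
  rw [hookLen, List.countP_drop_eq_sub hk (fun a ha => ?_) (by omega)]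
  simpa [← List.getD_eq_getElem _ 0 ha] using hrows a ha

theorem mem_pathSet_iff {m : ℕ} : m ∈ pathSet l ↔ ∀ a < l.length, betaNumber l a ≠ m := by
  simp [pathSet, betaNumber, eq_comm]

theorem exists_hookLen_eq_betaNumber_sub (hl : l.Pairwise (· ≥ ·)) {i j : ℕ}
    (hi : i < l.length) (hj : j < l.getD i 0) :
    ∃ m ∈ pathSet l, m < betaNumber l i ∧ hookLen l i j = betaNumber l i - m := by
  obtain ⟨k, hkn, hk⟩ := Nat.exists_forall_lt_iff_lt_of_antitone
    (P := fun a => j < l.getD a 0) (fun a b hab h => h.trans_le (getD_antitone hl hab)) l.length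
  have hik : i < k := (hk i hi).mp hj
  -- the east step at which the hook of `(i, j)` ends: `j` columns and the `n - k` rows of length `≤ j`
  refine ⟨j + (l.length - k), mem_pathSet_iff.mpr fun a ha => ?_, ?_, ?_⟩
  · have := hk a ha
    simp only [betaNumber]
    omega
  · simp only [betaNumber]
    omega
  · rw [hookLen_eq_of_forall_lt_iff hkn hik hk, betaNumber]
    omega

theorem betaNumber_sub_mem_hookset (hl : l.Pairwise (· ≥ ·)) {i m : ℕ} (hi : i < l.length)
    (hm : m ∈ pathSet l) (hmi : m < betaNumber l i) : betaNumber l i - m ∈ hookset l := by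
  obtain ⟨k, hkn, hk⟩ := Nat.exists_forall_lt_iff_lt_of_antitone
    (P := fun a => m < betaNumber l a) (fun a b hab h => h.trans_le (betaNumber_antitone hl hab))
    l.length
  have hne := mem_pathSet_iff.mp hm
  have hik : i < k := (hk i hi).mp hmi
  have below_k : ∀ a, k ≤ a → a < l.length → betaNumber l a + (a - k) < m := fun a hka ha => by
    have := betaNumber_add_sub_le hl hka ha
    have := hk k (by omega)
    have := hne k (by omega)
    omega
  have hkm : l.length ≤ m + k := by
    rcases lt_or_ge k l.length with hk' | hk'
    · have := below_k (l.length - 1) (by omega) (by omega)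
      omega
    · omega
  have hrows : ∀ a < l.length, m + k - l.length < l.getD a 0 ↔ a < k := by
    intro a ha
    rcases lt_or_ge a k with hak | hak
    · have := betaNumber_add_sub_le hl (show a ≤ k - 1 by omega) (by omega)
      have := (hk (k - 1) (by omega)).mpr (by omega)
      unfold betaNumber at *
      omega
    · have := below_k a hak ha
      unfold betaNumber at *
      omega
  -- `k` β-numbers exceed `m`, so the hook through `m` sits in column `m - (n - k)`
  have hji := (hrows i hi).mpr hik
  refine ⟨i, m + k - l.length, hi, hji, ?_⟩
  rw [hookLen_eq_of_forall_lt_iff hkn hik hrows]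
  unfold betaNumber at *
  omega

theorem pos_of_mem_hookset {h : ℕ} (hh : h ∈ hookset l) : 0 < h := by
  obtain ⟨i, j, -, hj, rfl⟩ := hh
  rw [hookLen]
  omega

theorem mem_hookset_or_mem_hookset_of_add_mem (hl : l.Pairwise (· ≥ ·)) {a b : ℕ}
    (hab : a + b ∈ hookset l) (ha : 0 < a) (hb : 0 < b) : a ∈ hookset l ∨ b ∈ hookset l := by
  obtain ⟨i, j, hi, hj, he⟩ := hab
  obtain ⟨m, hm, hmi, hhook⟩ := exists_hookLen_eq_betaNumber_sub hl hi hj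
  by_cases hx : betaNumber l i - a ∈ pathSet l
  · left
    have := betaNumber_sub_mem_hookset hl hi hx (by omega)
    rwa [show betaNumber l i - (betaNumber l i - a) = a by omega] at this
  · right
    obtain ⟨i', hi', heq⟩ : ∃ i' < l.length, betaNumber l i' = betaNumber l i - a := by
      simpa [mem_pathSet_iff] using hx
    have := betaNumber_sub_mem_hookset hl hi' hm (by omega)
    rwa [show betaNumber l i' - m = b by omega] at this

def hooksetCompl (hl : l.Pairwise (· ≥ ·)) : AddSubmonoid ℕ where
  carrier := (hookset l)ᶜ
  zero_mem' h := (pos_of_mem_hookset h).ne' rfl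
  add_mem' {a b} ha hb hab := by
    rcases Nat.eq_zero_or_pos a with rfl | ha₀
    · exact hb (by simpa using hab)
    rcases Nat.eq_zero_or_pos b with rfl | hb₀
    · exact ha (by simpa using hab)
    exact (mem_hookset_or_mem_hookset_of_add_mem hl hab ha₀ hb₀).elim ha hb

end Hooks

theorem stmt11 (s t : ℕ) (hs : 2 ≤ s) (ht : 2 ≤ t) (hco : Nat.Coprime s t)
    (l : List ℕ) (hl : IsPartitionList l) (hsc : IsCore l s) (htc : IsCore l t) :
    ∀ h ∈ hookset l, h ≤ s * t - s - t := by
  intro h hh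
  by_contra hgt
  have hst : AddSubmonoid.closure {s, t} ≤ hooksetCompl hl.1 := by
    rw [AddSubmonoid.closure_le]
    rintro x (rfl | rfl)
    exacts [fun hx => hsc x hx dvd_rfl, fun hx => htc x hx dvd_rfl]
  have hmem : h ∈ AddSubmonoid.closure {s, t} :=
    by_contra fun hc => hgt ((frobeniusNumber_pair hco hs ht).2 hc)
  exact hst hmem hh
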